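/- arXiv:2005.00538 — 3 statements merged into one kernel-verified Lean document; each statement's English description precedes it below -/
import Mathlib

section
/- In an alternative ring R with unity and idempotent e_1, setting e_2 = 1 − e_1, for all a ∈ R and all i, j ∈ {1,2} one has (e_i a)e_j = e_i (a e_j). -/
/-! Expanding the left alternative law at `(x + y, x)` and cancelling with the right one gives the
flexible law `(x y) x = x (y x)`. Distributivity then reduces each of the four identities to
flexibility at `e₁` or at `1 - e₁`. -/

theorem flexible_of_alternative {R : Type*} [NonUnitalNonAssocRing R]
    (alt1 : ∀ x y : R, x * x * y = x * (x * y))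
    (alt2 : ∀ x y : R, y * x * x = y * (x * x)) (x y : R) :
    x * y * x = x * (y * x) := by
  simpa only [add_mul, mul_add, alt1 x x, alt2 x y, alt1 y x, add_right_inj, add_left_inj]
    using alt1 (x + y) x

section Flexible

variable {R : Type*} [NonAssocRing R]

theorem mul_mul_one_sub_of_flexible (flex : ∀ x y : R, x * y * x = x * (y * x)) (e a : R) :
    e * a * (1 - e) = e * (a * (1 - e)) := by
  rw [mul_sub, mul_one, mul_sub, mul_one, mul_sub, flex]

theorem one_sub_mul_mul_of_flexible (flex : ∀ x y : R, x * y * x = x * (y * x)) (e a : R) :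
    (1 - e) * a * e = (1 - e) * (a * e) := by
  rw [sub_mul, sub_mul, sub_mul, one_mul, one_mul, flex]

end Flexible

theorem stmt3_general {R : Type*} [NonAssocRing R]
    (alt1 : ∀ x y : R, x * x * y = x * (x * y))
    (alt2 : ∀ x y : R, y * x * x = y * (x * x))
    (e₁ : R) :
    ∀ a : R, ∀ ei ∈ ({e₁, 1 - e₁} : Set R), ∀ ej ∈ ({e₁, 1 - e₁} : Set R),
      ei * a * ej = ei * (a * ej) := by
  have flex := flexible_of_alternative alt1 alt2
  rintro a ei hi ej hj
  simp only [Set.mem_insert_iff, Set.mem_singleton_iff] at hi hj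
  rcases hi with rfl | rfl <;> rcases hj with rfl | rfl
  · exact flex _ a
  · exact mul_mul_one_sub_of_flexible flex _ a
  · exact one_sub_mul_mul_of_flexible flex _ a
  · exact flex _ a

/-- in a unital alternative ring with idempotent `e₁` and
`e₂ = 1 - e₁`, one has `(eᵢ a) eⱼ = eᵢ (a eⱼ)` for all `a` and `i, j ∈ {1,2}`. -/
theorem stmt3 {R : Type*} [NonAssocRing R]
    (alt1 : ∀ x y : R, x * x * y = x * (x * y))
    (alt2 : ∀ x y : R, y * x * x = y * (x * x))
    (e₁ : R) (he : e₁ * e₁ = e₁) :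
    ∀ a : R, ∀ ei ∈ ({e₁, 1 - e₁} : Set R), ∀ ej ∈ ({e₁, 1 - e₁} : Set R),
      ei * a * ej = ei * (a * ej) :=
  stmt3_general alt1 alt2 e₁
end

section
/- Let R be a unital 2- and 3-torsion free alternative ring with a nontrivial idempotent e_1, e_2 = 1 − e_1, satisfying: for each i ∈ {1,2}, if x ∈ R has (x r)e_i = 0 for all r ∈ R, then x = 0. Then Z(R) = { z_11 + z_22 : z_11 ∈ R_11, z_22 ∈ R_22, and [z_11 + z_22, x] = 0 for all x ∈ R_12 and for all x ∈ R_21 }. -/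
/-!
Write `R₁₁, R₁₂, R₂₁, R₂₂` for the Peirce components of `e₁`. In a 2-torsion free alternative
ring the linearized alternative laws force `R_ij R_kl = 0` whenever `j ≠ k` and
`(i, j) ≠ (k, l)`, and `(R₁₁, R₁₁, R₁₂) = 0`. A central `z` commutes with `e₁`, so its
off-diagonal components vanish. Conversely, let `z = a + b` with `a ∈ R₁₁`, `b ∈ R₂₂` commute
with `R₁₂` and `R₂₁`. Replacing `e₁` by `1 - e₁` swaps the indices, so it suffices to show that
`z` commutes with `s ∈ R₁₁`, i.e. that `[a, s] = 0`. The Peirce rules give `a x = x b` for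
`x ∈ R₁₂`, hence `[a, s] x = (s x) b - s (x b) = -(x, s, b) = 0`; as `[a, s] ∈ R₁₁` also
annihilates `R₂₁` and `R₂₂`, we get `[a, s] R e₂ = 0`, and the nondegeneracy hypothesis
gives `[a, s] = 0`.
-/

/-- The pair of Peirce idempotents associated to an idempotent `e`:
`peirceE e 0 = e₁ = e` and `peirceE e 1 = e₂ = 1 - e`. -/
def peirceE {R : Type*} [NonAssocRing R] (e : R) (i : Fin 2) : R :=
  if i = 0 then e else 1 - e

/-- The Peirce component `R_ij = eᵢ R eⱼ` of a unital alternative ring relative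
to the idempotent `e` (indices `0, 1` standing for `1, 2`). -/
def peirceSet {R : Type*} [NonAssocRing R] (e : R) (i j : Fin 2) : Set R :=
  {x : R | ∃ a : R, x = peirceE e i * (a * peirceE e j)}

class IsAlternative (R : Type*) [NonAssocRing R] : Prop where
  mul_self_mul (x y : R) : x * x * y = x * (x * y)
  mul_mul_self (x y : R) : y * x * x = y * (x * x)

section Peirce

variable {R : Type*} [NonAssocRing R] {e x y : R} {i j : Fin 2}

@[simp] theorem peirceE_zero (e : R) : peirceE e 0 = e := rfl

@[simp] theorem peirceE_one (e : R) : peirceE e 1 = 1 - e := rfl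

theorem isIdempotentElem_peirceE (he : IsIdempotentElem e) (i : Fin 2) :
    IsIdempotentElem (peirceE e i) := by
  fin_cases i
  exacts [he, he.one_sub]

theorem peirceSet_one_sub (e : R) (i j : Fin 2) :
    peirceSet (1 - e) i j = peirceSet e i.rev j.rev := by
  have h (k : Fin 2) : peirceE (1 - e) k = peirceE e k.rev := by
    fin_cases k <;> simp
  simp only [peirceSet, h]

theorem sub_mem_peirceSet (hx : x ∈ peirceSet e i j) (hy : y ∈ peirceSet e i j) :
    x - y ∈ peirceSet e i j := by
  obtain ⟨a, rfl⟩ := hx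
  obtain ⟨b, rfl⟩ := hy
  exact ⟨a - b, by rw [sub_mul, mul_sub]⟩

theorem exists_peirce_decomposition (e r : R) :
    ∃ r₀₀ ∈ peirceSet e 0 0, ∃ r₀₁ ∈ peirceSet e 0 1, ∃ r₁₀ ∈ peirceSet e 1 0,
      ∃ r₁₁ ∈ peirceSet e 1 1, r = r₀₀ + r₀₁ + r₁₀ + r₁₁ :=
  ⟨_, ⟨r, rfl⟩, _, ⟨r, rfl⟩, _, ⟨r, rfl⟩, _, ⟨r, rfl⟩, by
    simp only [peirceE_zero, peirceE_one, mul_sub, sub_mul, mul_one, one_mul]; abel⟩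

end Peirce

namespace IsAlternative

variable {R : Type*} [NonAssocRing R] [IsAlternative R] {e a b c s x y z : R}

theorem associator_swap_left (x y z : R) : associator y x z = -associator x y z := by
  have h := mul_self_mul (x + y) z
  simp only [add_mul, mul_add, mul_self_mul] at h
  simp only [associator_apply]
  linear_combination (norm := abel) h

theorem associator_swap_right (x y z : R) : associator x z y = -associator x y z := by
  have h := mul_mul_self (y + z) x
  simp only [add_mul, mul_add, mul_mul_self] at h
  simp only [associator_apply]
  linear_combination (norm := abel) h

theorem flexible (x y : R) : associator x y x = 0 := by
  rw [associator_swap_right, associator_apply, mul_self_mul, sub_self, neg_zero]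

theorem peirceE_mul_mul (i j : Fin 2) (y : R) :
    peirceE e i * y * peirceE e j = peirceE e i * (y * peirceE e j) := by
  have h : e * y * e = e * (y * e) := sub_eq_zero.1 (flexible e y)
  fin_cases i <;> fin_cases j <;>
    simp only [Fin.zero_eta, Fin.mk_one, Fin.isValue, peirceE_zero, peirceE_one, mul_sub, sub_mul,
      mul_one, one_mul, h]

theorem mem_peirceSet_iff (he : IsIdempotentElem e) {i j : Fin 2} :
    x ∈ peirceSet e i j ↔ peirceE e i * x = x ∧ x * peirceE e j = x := by
  constructor
  · rintro ⟨a, rfl⟩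
    constructor
    · rw [← mul_self_mul, (isIdempotentElem_peirceE he i).eq]
    · rw [peirceE_mul_mul, mul_mul_self, (isIdempotentElem_peirceE he j).eq]
  · rintro ⟨hl, hr⟩
    exact ⟨x, by rw [hr, hl]⟩

theorem mem_peirceSet_zero_zero_iff (he : IsIdempotentElem e) :
    x ∈ peirceSet e 0 0 ↔ e * x = x ∧ x * e = x := by
  simp [mem_peirceSet_iff he]

theorem mem_peirceSet_zero_one_iff (he : IsIdempotentElem e) :
    x ∈ peirceSet e 0 1 ↔ e * x = x ∧ x * e = 0 := by
  simp [mem_peirceSet_iff he, mul_sub]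

theorem mem_peirceSet_one_zero_iff (he : IsIdempotentElem e) :
    x ∈ peirceSet e 1 0 ↔ e * x = 0 ∧ x * e = x := by
  simp [mem_peirceSet_iff he, sub_mul]

theorem mem_peirceSet_one_one_iff (he : IsIdempotentElem e) :
    x ∈ peirceSet e 1 1 ↔ e * x = 0 ∧ x * e = 0 := by
  simp [mem_peirceSet_iff he, mul_sub, sub_mul]

theorem eq_zero_of_mul_idempotent_eq_zsmul (tor2 : ∀ x : R, (2 : ℕ) • x = 0 → x = 0)
    (he : IsIdempotentElem e) {k : ℤ} (hk : k * k - k = 2) (h : x * e = k • x) : x = 0 := by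
  have h2 := mul_mul_self e x
  rw [he.eq, h, smul_mul_assoc, h, smul_smul] at h2
  refine tor2 x ?_
  rw [← ofNat_smul_eq_nsmul ℤ, ← hk, sub_smul, h2, sub_self]

theorem eq_zero_of_idempotent_mul_eq_zsmul (tor2 : ∀ x : R, (2 : ℕ) • x = 0 → x = 0)
    (he : IsIdempotentElem e) {k : ℤ} (hk : k * k - k = 2) (h : e * x = k • x) : x = 0 := by
  have h2 := mul_self_mul e x
  rw [he.eq, h, mul_smul_comm, h, smul_smul] at h2
  refine tor2 x ?_
  rw [← ofNat_smul_eq_nsmul ℤ, ← hk, sub_smul, ← h2, sub_self]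

-- In the next three lemmas a linearized alternative law makes the product an eigenvector of
-- multiplication by `e` with eigenvalue `2` or `-1`.
theorem peirceSet_zero_one_mul_zero_zero (tor2 : ∀ x : R, (2 : ℕ) • x = 0 → x = 0)
    (he : IsIdempotentElem e) (hx : x ∈ peirceSet e 0 1) (ha : a ∈ peirceSet e 0 0) :
    x * a = 0 := by
  rw [mem_peirceSet_zero_one_iff he] at hx
  rw [mem_peirceSet_zero_zero_iff he] at ha
  have h := associator_swap_right x e a
  simp only [associator_apply, hx.2, ha.1, ha.2, zero_mul] at h
  exact eq_zero_of_mul_idempotent_eq_zsmul tor2 he (k := 2) (by norm_num)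
    (by linear_combination (norm := abel) h)

theorem peirceSet_zero_zero_mul_one_zero (tor2 : ∀ x : R, (2 : ℕ) • x = 0 → x = 0)
    (he : IsIdempotentElem e) (ha : a ∈ peirceSet e 0 0) (hy : y ∈ peirceSet e 1 0) :
    a * y = 0 := by
  rw [mem_peirceSet_zero_zero_iff he] at ha
  rw [mem_peirceSet_one_zero_iff he] at hy
  have h := associator_swap_left a e y
  simp only [associator_apply, hy.1, ha.1, ha.2, mul_zero] at h
  exact eq_zero_of_idempotent_mul_eq_zsmul tor2 he (k := 2) (by norm_num)
    (by linear_combination (norm := abel) -h)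

theorem peirceSet_zero_zero_mul_one_one (tor2 : ∀ x : R, (2 : ℕ) • x = 0 → x = 0)
    (he : IsIdempotentElem e) (ha : a ∈ peirceSet e 0 0) (hb : b ∈ peirceSet e 1 1) :
    a * b = 0 := by
  rw [mem_peirceSet_zero_zero_iff he] at ha
  rw [mem_peirceSet_one_one_iff he] at hb
  have h := associator_swap_right a e b
  simp only [associator_apply, hb.1, hb.2, ha.2, mul_zero] at h
  exact eq_zero_of_mul_idempotent_eq_zsmul tor2 he (k := -1) (by norm_num)
    (by linear_combination (norm := abel) h)

theorem peirceSet_mul_eq_zero (tor2 : ∀ x : R, (2 : ℕ) • x = 0 → x = 0)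
    (he : IsIdempotentElem e) {i j k l : Fin 2} (hx : x ∈ peirceSet e i j)
    (hy : y ∈ peirceSet e k l) (hjk : j ≠ k := by decide) (hne : (i, j) ≠ (k, l) := by decide) :
    x * y = 0 := by
  have swap {z : R} {i j : Fin 2} (hz : z ∈ peirceSet e i j) :
      z ∈ peirceSet (1 - e) i.rev j.rev := by
    simpa [peirceSet_one_sub] using hz
  fin_cases i <;> fin_cases j <;> fin_cases k <;> fin_cases l
  all_goals first
    | exact absurd rfl hjk
    | exact absurd rfl hne
    | exact peirceSet_zero_one_mul_zero_zero tor2 he hx hy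
    | exact peirceSet_zero_zero_mul_one_zero tor2 he hx hy
    | exact peirceSet_zero_zero_mul_one_one tor2 he hx hy
    | exact peirceSet_zero_one_mul_zero_zero tor2 he.one_sub (swap hx) (swap hy)
    | exact peirceSet_zero_zero_mul_one_zero tor2 he.one_sub (swap hx) (swap hy)
    | exact peirceSet_zero_zero_mul_one_one tor2 he.one_sub (swap hx) (swap hy)

theorem mul_mem_peirceSet_zero (he : IsIdempotentElem e) {j : Fin 2}
    (ha : a ∈ peirceSet e 0 0) (hx : x ∈ peirceSet e 0 j) : a * x ∈ peirceSet e 0 j := by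
  rw [mem_peirceSet_zero_zero_iff he] at ha
  rw [mem_peirceSet_iff he, peirceE_zero] at hx ⊢
  have hl := associator_swap_left a e x
  have hr := associator_swap_right a x e
  simp only [associator_apply, ha.1, ha.2, hx.1, sub_self, neg_zero] at hl hr
  have hassoc : a * x * peirceE e j = a * (x * peirceE e j) := by
    have h : a * x * e = a * (x * e) := by linear_combination (norm := abel) hr
    unfold peirceE
    split_ifs
    · exact h
    · rw [mul_sub, mul_sub, mul_one, mul_one, h, mul_sub]
  exact ⟨by linear_combination (norm := abel) -hl, by rw [hassoc, hx.2]⟩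

theorem mul_assoc_of_mem_peirceSet_zero_one (tor2 : ∀ x : R, (2 : ℕ) • x = 0 → x = 0)
    (he : IsIdempotentElem e) (ha : a ∈ peirceSet e 0 0) (hb : b ∈ peirceSet e 0 0)
    (hx : x ∈ peirceSet e 0 1) : a * b * x = a * (b * x) := by
  have h := associator_swap_right a x b
  rw [associator_apply, associator_apply, peirceSet_mul_eq_zero tor2 he hx hb,
    peirceSet_mul_eq_zero tor2 he (mul_mem_peirceSet_zero he ha hx) hb, mul_zero, sub_zero,
    neg_zero] at h
  exact sub_eq_zero.1 h

theorem lie_mul_eq_zero_of_mem_peirceSet_zero_one (tor2 : ∀ x : R, (2 : ℕ) • x = 0 → x = 0)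
    (he : IsIdempotentElem e) (ha : a ∈ peirceSet e 0 0) (hb : b ∈ peirceSet e 1 1)
    (hab : ∀ u ∈ peirceSet e 0 1, a * u = u * b) (hs : s ∈ peirceSet e 0 0)
    (hx : x ∈ peirceSet e 0 1) : ⁅a, s⁆ * x = 0 := by
  have h := associator_swap_left x s b
  rw [associator_apply, associator_apply, peirceSet_mul_eq_zero tor2 he hx hs,
    peirceSet_mul_eq_zero tor2 he hs hb, zero_mul, mul_zero, sub_zero, neg_zero] at h
  rw [Ring.lie_def, sub_mul, mul_assoc_of_mem_peirceSet_zero_one tor2 he ha hs hx,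
    hab _ (mul_mem_peirceSet_zero he hs hx),
    mul_assoc_of_mem_peirceSet_zero_one tor2 he hs ha hx, hab x hx]
  exact h

theorem eq_zero_of_mem_peirceSet_zero_zero_of_forall_mul_eq_zero
    (tor2 : ∀ x : R, (2 : ℕ) • x = 0 → x = 0) (he : IsIdempotentElem e)
    (hd : ∀ x : R, (∀ r : R, x * r * (1 - e) = 0) → x = 0) (hc : c ∈ peirceSet e 0 0)
    (hcx : ∀ x ∈ peirceSet e 0 1, c * x = 0) : c = 0 := by
  refine hd c fun r => ?_
  obtain ⟨r₀₀, h₀₀, r₀₁, h₀₁, r₁₀, h₁₀, r₁₁, h₁₁, rfl⟩ := exists_peirce_decomposition e r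
  have hc₀₀ := ((mem_peirceSet_zero_zero_iff he).1 (mul_mem_peirceSet_zero he hc h₀₀)).2
  rw [mul_add, mul_add, mul_add, hcx r₀₁ h₀₁, peirceSet_mul_eq_zero tor2 he hc h₁₀,
    peirceSet_mul_eq_zero tor2 he hc h₁₁, add_zero, add_zero, add_zero, mul_sub, mul_one, hc₀₀,
    sub_self]

theorem commute_of_mem_peirceSet_zero_zero (tor2 : ∀ x : R, (2 : ℕ) • x = 0 → x = 0)
    (he : IsIdempotentElem e) (hd : ∀ x : R, (∀ r : R, x * r * (1 - e) = 0) → x = 0)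
    (ha : a ∈ peirceSet e 0 0) (hb : b ∈ peirceSet e 1 1)
    (hab : ∀ x ∈ peirceSet e 0 1, Commute (a + b) x) (hs : s ∈ peirceSet e 0 0) :
    Commute (a + b) s := by
  have hab₀₁ (u : R) (hu : u ∈ peirceSet e 0 1) : a * u = u * b := by
    have h := (hab u hu).eq
    rwa [add_mul, mul_add, peirceSet_mul_eq_zero tor2 he hb hu, peirceSet_mul_eq_zero tor2 he hu ha,
      add_zero, zero_add] at h
  have hlie : ⁅a, s⁆ = 0 :=
    eq_zero_of_mem_peirceSet_zero_zero_of_forall_mul_eq_zero tor2 he hd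
      (sub_mem_peirceSet (mul_mem_peirceSet_zero he ha hs) (mul_mem_peirceSet_zero he hs ha))
      fun x hx => lie_mul_eq_zero_of_mem_peirceSet_zero_one tor2 he ha hb hab₀₁ hs hx
  show (a + b) * s = s * (a + b)
  rw [add_mul, mul_add, peirceSet_mul_eq_zero tor2 he hb hs, peirceSet_mul_eq_zero tor2 he hs hb,
    add_zero, add_zero]
  exact sub_eq_zero.1 hlie

theorem eq_mul_mul_add_one_sub_mul_mul_of_commute (he : IsIdempotentElem e) (hz : Commute z e) :
    z = e * (z * e) + (1 - e) * (z * (1 - e)) := by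
  have h : e * (e * z) = e * z := by rw [← mul_self_mul, he.eq]
  simp only [sub_mul, mul_sub, one_mul, mul_one, hz.eq, h]
  abel

end IsAlternative

open IsAlternative

theorem stmt5_general {R : Type*} [NonAssocRing R]
    (alt1 : ∀ x y : R, x * x * y = x * (x * y))
    (alt2 : ∀ x y : R, y * x * x = y * (x * x))
    (tor2 : ∀ x : R, (2 : ℕ) • x = 0 → x = 0)
    (e₁ : R) (he : e₁ * e₁ = e₁)
    (hd1 : ∀ x : R, (∀ r : R, x * r * e₁ = 0) → x = 0)
    (hd2 : ∀ x : R, (∀ r : R, x * r * (1 - e₁) = 0) → x = 0)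
    :
    {z : R | ∀ r : R, z * r = r * z} =
      {w : R | ∃ z11 ∈ peirceSet e₁ 0 0, ∃ z22 ∈ peirceSet e₁ 1 1,
        w = z11 + z22 ∧
        (∀ x ∈ peirceSet e₁ 0 1, (z11 + z22) * x = x * (z11 + z22)) ∧
        (∀ x ∈ peirceSet e₁ 1 0, (z11 + z22) * x = x * (z11 + z22))}
    := by
  have : IsAlternative R := ⟨alt1, alt2⟩
  replace he : IsIdempotentElem e₁ := he
  ext z
  constructor
  · intro hz
    have hdiag := eq_mul_mul_add_one_sub_mul_mul_of_commute he (hz e₁)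
    exact ⟨_, ⟨z, rfl⟩, _, ⟨z, rfl⟩, hdiag, fun x _ => hdiag ▸ hz x, fun x _ => hdiag ▸ hz x⟩
  · rintro ⟨a, ha, b, hb, rfl, h₀₁, h₁₀⟩ r
    obtain ⟨r₀₀, hr₀₀, r₀₁, hr₀₁, r₁₀, hr₁₀, r₁₁, hr₁₁, rfl⟩ := exists_peirce_decomposition e₁ r
    have hc₀₀ := commute_of_mem_peirceSet_zero_zero tor2 he hd2 ha hb h₀₁ hr₀₀
    have hc₁₁ : Commute (b + a) r₁₁ :=
      commute_of_mem_peirceSet_zero_zero tor2 he.one_sub (by simpa using hd1)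
        (by rwa [peirceSet_one_sub]) (by rwa [peirceSet_one_sub])
        (fun x hx => add_comm a b ▸ h₁₀ x (by rwa [peirceSet_one_sub] at hx))
        (by rwa [peirceSet_one_sub])
    rw [add_comm b a] at hc₁₁
    exact ((hc₀₀.add_right (h₀₁ _ hr₀₁)).add_right (h₁₀ _ hr₁₀)).add_right hc₁₁

theorem stmt5 {R : Type*} [NonAssocRing R]
    (alt1 : ∀ x y : R, x * x * y = x * (x * y))
    (alt2 : ∀ x y : R, y * x * x = y * (x * x))
    (tor2 : ∀ x : R, (2 : ℕ) • x = 0 → x = 0)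
    (tor3 : ∀ x : R, (3 : ℕ) • x = 0 → x = 0)
    (e₁ : R) (he : e₁ * e₁ = e₁) (he0 : e₁ ≠ 0) (he1 : e₁ ≠ 1)
    (hd1 : ∀ x : R, (∀ r : R, x * r * e₁ = 0) → x = 0)
    (hd2 : ∀ x : R, (∀ r : R, x * r * (1 - e₁) = 0) → x = 0)
    :
    {z : R | ∀ r : R, z * r = r * z} =
      {w : R | ∃ z11 ∈ peirceSet e₁ 0 0, ∃ z22 ∈ peirceSet e₁ 1 1,
        w = z11 + z22 ∧
        (∀ x ∈ peirceSet e₁ 0 1, (z11 + z22) * x = x * (z11 + z22)) ∧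
        (∀ x ∈ peirceSet e₁ 1 0, (z11 + z22) * x = x * (z11 + z22))} :=
  stmt5_general alt1 alt2 tor2 e₁ he hd1 hd2
end

section
/- Let R be a unital 2- and 3-torsion free alternative ring with a nontrivial idempotent e_1, e_2 = 1 − e_1, satisfying: for each i ∈ {1,2}, if x ∈ R has (x r)e_i = 0 for all r ∈ R, then x = 0. Let φ : R → R be an additive commuting map. Then for all i ≠ j in {1,2} and every x_ij ∈ R_ij: e_i φ(x_ij) e_j = [e_i φ(e_i) e_i + e_j φ(e_i) e_j, x_ij] = −[e_j φ(e_j) e_j + e_i φ(e_j) e_i, x_ij]. -/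
/-!
Linearizing `[φ x, x] = 0` gives `[φ x, e] = [x, φ e]`. Apply the Peirce projection
`y ↦ e y (1 - e)` onto `R₁₂` to both sides. Since an associator vanishes as soon as two of its
arguments lie in `{e, 1 - e}` (alternativity and flexibility), for `x ∈ R₁₂` one gets
`e (A x) (1 - e) = (e A e) x`, `e (x A) (1 - e) = x ((1 - e) A (1 - e))`, while
`((1 - e) A (1 - e)) x = 0 = x (e A e)`. Hence the projection of `[A, x]` is
`[e A e + (1 - e) A (1 - e), x]`: with `A = φ e` this is the first identity, and with `A = φ 1`,
which commutes with everything, it shows that the diagonal parts of `φ e` and `φ (1 - e)` have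
opposite commutators with `x`.
-/

class IsAlternative_s10 (R : Type*) [Mul R] : Prop where
  left_alternative : ∀ x y : R, x * x * y = x * (x * y)
  right_alternative : ∀ x y : R, y * x * x = y * (x * x)

section NonAssocRing

variable {R : Type*} [NonAssocRing R]

theorem associator_one_sub_middle (a b c : R) : associator a (1 - b) c = -associator a b c := by
  simp only [associator_apply, sub_mul, mul_sub, one_mul, mul_one]; abel

theorem associator_one_sub_right (a b c : R) : associator a b (1 - c) = -associator a b c := by
  simp only [associator_apply, mul_sub, mul_one]; abel

theorem commuting_map_linearized {φ : R → R} (hadd : ∀ x y, φ (x + y) = φ x + φ y)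
    (hcomm : ∀ x, φ x * x = x * φ x) (u v : R) :
    φ u * v - v * φ u = u * φ v - φ v * u := by
  have h := hcomm (u + v)
  simp only [hadd, add_mul, mul_add, hcomm u, hcomm v] at h
  linear_combination (norm := abel) h

theorem commute_commuting_map_one {φ : R → R} (hadd : ∀ x y, φ (x + y) = φ x + φ y)
    (hcomm : ∀ x, φ x * x = x * φ x) (u : R) : Commute (φ 1) u := by
  have h := commuting_map_linearized hadd hcomm u 1
  rw [mul_one, one_mul, sub_self] at h
  exact (sub_eq_zero.mp h.symm).symm

theorem mul_assoc_of_associator_eq_zero {a b c : R} (h : associator a b c = 0) :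
    a * b * c = a * (b * c) :=
  sub_eq_zero.mp h

end NonAssocRing

namespace IsAlternative_s10

variable {R : Type*} [NonAssocRing R] [IsAlternative_s10 R]

theorem associator_self_left (a b : R) : associator a a b = 0 := by
  rw [associator_apply, left_alternative, sub_self]

theorem associator_self_right (a b : R) : associator a b b = 0 := by
  rw [associator_apply, right_alternative, sub_self]

theorem associator_swap_left_s10 (a b c : R) : associator b a c = -associator a b c := by
  have h := associator_self_left (a + b) c
  simp only [associator_apply, add_mul, mul_add, left_alternative] at h ⊢
  linear_combination (norm := abel) h

theorem associator_swap_right_s10 (a b c : R) : associator a c b = -associator a b c := by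
  have h := associator_self_right a (b + c)
  simp only [associator_apply, add_mul, mul_add, right_alternative] at h ⊢
  linear_combination (norm := abel) h

theorem associator_swap_outer (a b c : R) : associator c b a = -associator a b c := by
  rw [associator_swap_left_s10, associator_swap_right_s10, associator_swap_left_s10, neg_neg]

theorem associator_self_outer (a b : R) : associator a b a = 0 := by
  rw [associator_swap_left_s10, associator_self_right, neg_zero]

theorem idem_mul_idem_mul {e : R} (he : IsIdempotentElem e) (y : R) : e * (e * y) = e * y := by
  rw [← left_alternative, he.eq]

theorem mul_idem_mul_idem {e : R} (he : IsIdempotentElem e) (y : R) : y * e * e = y * e := by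
  rw [right_alternative, he.eq]

theorem corner_mul_idem {e : R} (he : IsIdempotentElem e) (a : R) :
    e * (a * e) * e = e * (a * e) := by
  rw [mul_assoc_of_associator_eq_zero (associator_self_outer e _), mul_idem_mul_idem he]

theorem associator_self_one_sub_right (e y : R) : associator y e (1 - e) = 0 := by
  rw [associator_one_sub_right, associator_self_right, neg_zero]

theorem off_diag_mul_idem {e : R} (he : IsIdempotentElem e) (a : R) :
    e * (a * (1 - e)) * e = 0 := by
  have h : associator a (1 - e) e = 0 := by
    rw [associator_one_sub_middle, associator_self_right, neg_zero]
  rw [mul_assoc_of_associator_eq_zero (associator_self_outer e _),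
    mul_assoc_of_associator_eq_zero h, he.one_sub_mul_self, mul_zero, mul_zero]

theorem associator_self_one_sub_outer (e y : R) : associator e y (1 - e) = 0 := by
  rw [associator_one_sub_right, associator_self_outer, neg_zero]

/-! Below, `proj` refers to the Peirce projection `y ↦ e * (y * (1 - e))` onto `e R (1 - e)`. -/

theorem proj_idem_mul {e : R} (he : IsIdempotentElem e) (y : R) :
    e * (e * y * (1 - e)) = e * (y * (1 - e)) := by
  rw [mul_assoc_of_associator_eq_zero (associator_self_one_sub_outer e y), idem_mul_idem_mul he]

theorem proj_mul_idem {e : R} (he : IsIdempotentElem e) (y : R) :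
    e * (y * e * (1 - e)) = 0 := by
  rw [mul_assoc_of_associator_eq_zero (associator_self_one_sub_right e y),
    he.mul_one_sub_self, mul_zero, mul_zero]

theorem corner_mul_eq_zero {g x : R} (hg : IsIdempotentElem g) (hxg : x * g = x)
    (hgx : g * x = 0) (A : R) : g * (A * g) * x = 0 := by
  have h : associator x g (g * (A * g)) = 0 := by
    rw [associator_apply, hxg, idem_mul_idem_mul hg, sub_self]
  rw [associator_swap_outer, neg_eq_zero, associator_apply, corner_mul_idem hg, hgx, mul_zero,
    sub_zero] at h
  exact h

theorem mul_corner_eq_zero {g x : R} (hg : IsIdempotentElem g) (hxg : x * g = 0)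
    (hgx : g * x = x) (A : R) : x * (g * (A * g)) = 0 := by
  have h : associator (g * (A * g)) g x = 0 := by
    rw [associator_apply, corner_mul_idem hg, hgx, sub_self]
  rwa [associator_swap_outer, neg_eq_zero, associator_apply, hxg, zero_mul, zero_sub,
    neg_eq_zero, idem_mul_idem_mul hg] at h

theorem proj_mul_left {e x : R} (he : IsIdempotentElem e) (hex : e * x = x) (hxe : x * e = 0)
    (A : R) : e * (A * x * (1 - e)) = e * (A * e) * x := by
  have hfx : (1 - e) * x = 0 := by rw [sub_mul, one_mul, hex, sub_self]
  have hxf : x * (1 - e) = x := by rw [mul_sub, mul_one, hxe, sub_zero]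
  have h₁ : A * x * (1 - e) = A * e * x := by
    have h := associator_swap_right_s10 A (1 - e) x
    rw [associator_apply, associator_apply, hxf, hfx, mul_zero, sub_zero, mul_sub A 1 e, mul_one,
      sub_mul] at h
    linear_combination (norm := abel) h
  have h₂ : associator e (A * e) x = 0 := by
    rw [associator_swap_left_s10, associator_apply, mul_idem_mul_idem he, hex, sub_self, neg_zero]
  rw [h₁, ← mul_assoc_of_associator_eq_zero h₂]

theorem proj_mul_right {e x : R} (he : IsIdempotentElem e) (hex : e * x = x) (hxe : x * e = 0)
    (A : R) : e * (x * A * (1 - e)) = x * ((1 - e) * (A * (1 - e))) := by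
  have hxf : x * (1 - e) = x := by rw [mul_sub, mul_one, hxe, sub_zero]
  have h₁ : e * (x * A) = x * ((1 - e) * A) := by
    have h := associator_swap_left_s10 x e A
    rw [associator_apply, associator_apply, hex, hxe, zero_mul, zero_sub, neg_neg] at h
    rw [sub_mul, one_mul, mul_sub]
    linear_combination (norm := abel) -h
  have h₂ : associator x ((1 - e) * A) (1 - e) = 0 := by
    rw [associator_swap_right_s10, associator_apply, hxf, idem_mul_idem_mul he.one_sub, sub_self, neg_zero]
  rw [← mul_assoc_of_associator_eq_zero (associator_self_one_sub_outer e _), h₁,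
    mul_assoc_of_associator_eq_zero h₂, mul_assoc_of_associator_eq_zero (associator_self_outer _ _)]

theorem proj_commutator {e x : R} (he : IsIdempotentElem e) (hex : e * x = x) (hxe : x * e = 0)
    (A : R) :
    e * ((A * x - x * A) * (1 - e)) =
      (e * (A * e) + (1 - e) * (A * (1 - e))) * x -
        x * (e * (A * e) + (1 - e) * (A * (1 - e))) := by
  have hfx : (1 - e) * x = 0 := by rw [sub_mul, one_mul, hex, sub_self]
  have hxf : x * (1 - e) = x := by rw [mul_sub, mul_one, hxe, sub_zero]
  rw [sub_mul, mul_sub, proj_mul_left he hex hxe, proj_mul_right he hex hxe, add_mul, mul_add,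
    corner_mul_eq_zero he.one_sub hxf hfx, mul_corner_eq_zero he hxe hex, add_zero, zero_add]

theorem commuting_map_peirce_off_diag {φ : R → R} (hadd : ∀ x y, φ (x + y) = φ x + φ y)
    (hcomm : ∀ x, φ x * x = x * φ x) {e f x : R} (he : IsIdempotentElem e) (hef : e + f = 1)
    (a : R) (hx : x = e * (a * f)) :
    e * (φ x * f) = (e * (φ e * e) + f * (φ e * f)) * x - x * (e * (φ e * e) + f * (φ e * f)) ∧
      e * (φ x * f) =
        -((f * (φ f * f) + e * (φ f * e)) * x - x * (f * (φ f * f) + e * (φ f * e))) := by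
  obtain rfl : f = 1 - e := eq_sub_of_add_eq' hef
  have hex : e * x = x := hx ▸ idem_mul_idem_mul he _
  have hxe : x * e = 0 := hx ▸ off_diag_mul_idem he a
  have hφx : e * (φ x * (1 - e)) = e * ((φ e * x - x * φ e) * (1 - e)) := by
    rw [commuting_map_linearized hadd hcomm, sub_mul _ _ (1 - e), mul_sub e, proj_idem_mul he,
      proj_mul_idem he, sub_zero]
  have hφ1 : e * ((φ 1 * x - x * φ 1) * (1 - e)) = 0 := by
    rw [(commute_commuting_map_one hadd hcomm x).eq, sub_self, zero_mul, mul_zero]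
  have hφ1_split : φ 1 = φ e + φ (1 - e) := by rw [← hadd, add_sub_cancel]
  rw [proj_commutator he hex hxe] at hφx hφ1
  refine ⟨hφx, ?_⟩
  rw [hφx]; rw [hφ1_split] at hφ1
  simp only [add_mul, mul_add] at hφ1 ⊢
  linear_combination (norm := abel) hφ1

end IsAlternative_s10

theorem stmt10_general {R : Type*} [NonAssocRing R]
    (alt1 : ∀ x y : R, x * x * y = x * (x * y))
    (alt2 : ∀ x y : R, y * x * x = y * (x * x))
    (e₁ : R) (he : e₁ * e₁ = e₁)
    (φ : R → R) (hadd : ∀ x y : R, φ (x + y) = φ x + φ y)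
    (hcomm : ∀ x : R, φ x * x = x * φ x)
    :
    ∀ i j : Fin 2, i ≠ j → ∀ x ∈ peirceSet e₁ i j,
      (peirceE e₁ i * (φ x * peirceE e₁ j) =
        (peirceE e₁ i * (φ (peirceE e₁ i) * peirceE e₁ i) +
         peirceE e₁ j * (φ (peirceE e₁ i) * peirceE e₁ j)) * x -
        x * (peirceE e₁ i * (φ (peirceE e₁ i) * peirceE e₁ i) +
         peirceE e₁ j * (φ (peirceE e₁ i) * peirceE e₁ j))) ∧
      (peirceE e₁ i * (φ x * peirceE e₁ j) =
        -((peirceE e₁ j * (φ (peirceE e₁ j) * peirceE e₁ j) +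
           peirceE e₁ i * (φ (peirceE e₁ j) * peirceE e₁ i)) * x -
          x * (peirceE e₁ j * (φ (peirceE e₁ j) * peirceE e₁ j) +
           peirceE e₁ i * (φ (peirceE e₁ j) * peirceE e₁ i))))
    := by
  intro i j hij x ⟨a, hxa⟩
  have : IsAlternative_s10 R := ⟨alt1, alt2⟩
  fin_cases i <;> fin_cases j <;> simp only [peirceE] at hxa ⊢
  · exact absurd rfl hij
  · exact IsAlternative_s10.commuting_map_peirce_off_diag hadd hcomm he (add_sub_cancel e₁ 1) a hxa
  · exact IsAlternative_s10.commuting_map_peirce_off_diag hadd hcomm (IsIdempotentElem.one_sub he)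
      (sub_add_cancel 1 e₁) a hxa
  · exact absurd rfl hij

theorem stmt10 {R : Type*} [NonAssocRing R]
    (alt1 : ∀ x y : R, x * x * y = x * (x * y))
    (alt2 : ∀ x y : R, y * x * x = y * (x * x))
    (tor2 : ∀ x : R, (2 : ℕ) • x = 0 → x = 0)
    (tor3 : ∀ x : R, (3 : ℕ) • x = 0 → x = 0)
    (e₁ : R) (he : e₁ * e₁ = e₁) (he0 : e₁ ≠ 0) (he1 : e₁ ≠ 1)
    (hd1 : ∀ x : R, (∀ r : R, x * r * e₁ = 0) → x = 0)
    (hd2 : ∀ x : R, (∀ r : R, x * r * (1 - e₁) = 0) → x = 0)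
    (φ : R → R) (hadd : ∀ x y : R, φ (x + y) = φ x + φ y)
    (hcomm : ∀ x : R, φ x * x = x * φ x)
    :
    ∀ i j : Fin 2, i ≠ j → ∀ x ∈ peirceSet e₁ i j,
      (peirceE e₁ i * (φ x * peirceE e₁ j) =
        (peirceE e₁ i * (φ (peirceE e₁ i) * peirceE e₁ i) +
         peirceE e₁ j * (φ (peirceE e₁ i) * peirceE e₁ j)) * x -
        x * (peirceE e₁ i * (φ (peirceE e₁ i) * peirceE e₁ i) +
         peirceE e₁ j * (φ (peirceE e₁ i) * peirceE e₁ j))) ∧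
      (peirceE e₁ i * (φ x * peirceE e₁ j) =
        -((peirceE e₁ j * (φ (peirceE e₁ j) * peirceE e₁ j) +
           peirceE e₁ i * (φ (peirceE e₁ j) * peirceE e₁ i)) * x -
          x * (peirceE e₁ j * (φ (peirceE e₁ j) * peirceE e₁ j) +
           peirceE e₁ i * (φ (peirceE e₁ j) * peirceE e₁ i)))) :=
  stmt10_general alt1 alt2 e₁ he φ hadd hcomm
end
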